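/- Let $\rho_p = p|\psi^+\rangle\langle\psi^+| + \frac{1-p}{6}I_6$ on $\mathbb{C}^2\otimes\mathbb{C}^3$ with $|\psi^+\rangle = \frac{1}{\sqrt2}(|00\rangle+|11\rangle)$ and $0\le p\le 1$. Taking $U = I_2$ and $V = |0\rangle\langle1| + |1\rangle\langle0| + |2\rangle\langle2|$, so $A_i = \sigma_i$ and $B_j = V\lambda_jV^\dagger$, the violation value $F_{U,V}^{(3)}(\rho_p) := \big(\langle 3I_2\otimes B_1 + 2A_3\otimes I_3 - A_3\otimes B_1 + 2A_3\otimes B_2\rangle_{\rho_p}^2 + 9\langle A_1\otimes B_3 + A_2\otimes B_4\rangle_{\rho_p}^2\big)^{1/2} - \langle 2I_2\otimes I_3 - I_2\otimes B_1 + 2I_2\otimes B_2 + 3A_3\otimes B_1\rangle_{\rho_p}$ equals $8p-2$; in particular it is positive if and only if $p > 1/4$. -/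

import Mathlib

open Matrix Kronecker
open scoped ComplexOrder

noncomputable section

abbrev M2 : Type := Matrix (Fin 2) (Fin 2) ℂ
abbrev M3 : Type := Matrix (Fin 3) (Fin 3) ℂ
abbrev M6 : Type := Matrix (Fin 2 × Fin 3) (Fin 2 × Fin 3) ℂ

/-- Pauli matrices -/
def sig1 : M2 := Matrix.single 0 1 1 + Matrix.single 1 0 1
def sig2 : M2 := Complex.I • Matrix.single 0 1 1 - Complex.I • Matrix.single 1 0 1
def sig3 : M2 := Matrix.single 0 0 1 - Matrix.single 1 1 1

/-- Gell-Mann-type matrices on C^3 -/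
def lam1 : M3 := Matrix.single 0 0 1 - Matrix.single 1 1 1
def lam2 : M3 := Matrix.single 0 0 1 - Matrix.single 2 2 1
def lam3 : M3 := Matrix.single 0 1 1 + Matrix.single 1 0 1
def lam4 : M3 := Complex.I • Matrix.single 0 1 1 - Complex.I • Matrix.single 1 0 1

/-- partial transpose on the first (2-dimensional) factor -/
def PT {d : ℕ} (ρ : Matrix (Fin 2 × Fin d) (Fin 2 × Fin d) ℂ) :
    Matrix (Fin 2 × Fin d) (Fin 2 × Fin d) ℂ :=
  fun p q => ρ (q.1, p.2) (p.1, q.2)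

/-- expectation value of an observable M in the state ρ -/
def expval {n : Type} [Fintype n] (ρ M : Matrix n n ℂ) : ℝ := ((ρ * M).trace).re

/-- projector |ψ⟩⟨ψ| -/
def proj {n : Type} (ψ : n → ℂ) : Matrix n n ℂ := Matrix.vecMulVec ψ (star ψ)


/-- A_i = U σ_i U†, B_j = V λ_j V† -/
def OA (U : M2) (i : Fin 3) : M2 := U * (![sig1, sig2, sig3] i) * Uᴴ
def OB (V : M3) (j : Fin 4) : M3 := V * (![lam1, lam2, lam3, lam4] j) * Vᴴ

/-- the observable ⟨2 I⊗I - I⊗B₁ + 2 I⊗B₂ + 3 A₃⊗B₁⟩ -/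
def Obs0 (U : M2) (V : M3) : M6 :=
  (2:ℂ) • ((1:M2) ⊗ₖ (1:M3)) - (1:M2) ⊗ₖ OB V 0 + (2:ℂ) • ((1:M2) ⊗ₖ OB V 1)
    + (3:ℂ) • (OA U 2 ⊗ₖ OB V 0)

/-- the observable 3 I⊗B₁ + 2 A₃⊗I - A₃⊗B₁ + 2 A₃⊗B₂ -/
def Obs1 (U : M2) (V : M3) : M6 :=
  (3:ℂ) • ((1:M2) ⊗ₖ OB V 0) + (2:ℂ) • (OA U 2 ⊗ₖ (1:M3)) - OA U 2 ⊗ₖ OB V 0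
    + (2:ℂ) • (OA U 2 ⊗ₖ OB V 1)

/-- the observable A₁⊗B₃ + A₂⊗B₄ -/
def Obs2 (U : M2) (V : M3) : M6 := OA U 0 ⊗ₖ OB V 2 + OA U 1 ⊗ₖ OB V 3

/-- |ψ⁺⟩ = (|00⟩+|11⟩)/√2 in C²⊗C³ -/
def psiPlus : Fin 2 × Fin 3 → ℂ :=
  fun p => if p = (0,0) then (1/Real.sqrt 2 : ℝ) else if p = (1,1) then (1/Real.sqrt 2 : ℝ) else 0

/-- ρ_p = p|ψ⁺⟩⟨ψ⁺| + (1-p)/6 I₆ -/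
def rhoIso (p : ℝ) : M6 := ((p : ℝ) : ℂ) • proj psiPlus + (((1 - p)/6 : ℝ) : ℂ) • (1 : M6)

/-- V = |0⟩⟨1| + |1⟩⟨0| + |2⟩⟨2| -/
def Vswap : M3 :=
  Matrix.single 0 1 1 + Matrix.single 1 0 1 + Matrix.single 2 2 1

/-! V permutes the basis vectors |0⟩ and |1⟩, so each B_j is λ_j with those two indices
swapped and every observable involved is an explicit sparse matrix. Since |ψ⁺⟩ is supported
on |00⟩ and |11⟩, ⟨M⟩_{ρ_p} = p ⟨ψ⁺|M|ψ⁺⟩ + (1-p)/6 Tr M only involves four entries and the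
trace of M. This gives the three expectation values 0, 2p and 2 - 2p, whence
F = √(36 p²) - (2 - 2p) = 8p - 2. -/

theorem Matrix.permMatrix_mul_mul_conjTranspose {n R : Type*} [DecidableEq n] [Fintype n]
    [Semiring R] [StarRing R] (σ : Equiv.Perm n) (A : Matrix n n R) :
    σ.permMatrix R * A * (σ.permMatrix R)ᴴ = A.submatrix σ σ := by
  rw [conjTranspose_permMatrix, PEquiv.toMatrix_toPEquiv_mul, PEquiv.mul_toMatrix_toPEquiv,
    submatrix_submatrix]
  rfl

lemma Vswap_eq_permMatrix : Vswap = (Equiv.swap (0 : Fin 3) 1).permMatrix ℂ := by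
  ext i j
  fin_cases i <;> fin_cases j <;> simp [Vswap, Equiv.swap_apply_def, Matrix.single]

lemma OB_Vswap (j : Fin 4) :
    OB Vswap j = (![lam1, lam2, lam3, lam4] j).submatrix (Equiv.swap 0 1) (Equiv.swap 0 1) := by
  rw [OB, Vswap_eq_permMatrix, Matrix.permMatrix_mul_mul_conjTranspose]

lemma OA_one (i : Fin 3) : OA 1 i = ![sig1, sig2, sig3] i := by
  simp [OA]

lemma trace_proj_mul {n : Type} [Fintype n] (ψ : n → ℂ) (M : Matrix n n ℂ) :
    (proj ψ * M).trace = star ψ ⬝ᵥ (M *ᵥ ψ) := by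
  rw [proj, vecMulVec_mul, trace_vecMulVec, dotProduct_comm, dotProduct_mulVec]

lemma star_psiPlus_dotProduct_mulVec (M : M6) :
    star psiPlus ⬝ᵥ (M *ᵥ psiPlus) =
      (M (0,0) (0,0) + M (0,0) (1,1) + M (1,1) (0,0) + M (1,1) (1,1)) / 2 := by
  have h : (Real.sqrt 2 : ℂ)⁻¹ * (Real.sqrt 2 : ℂ)⁻¹ = 1 / 2 := by
    rw [← mul_inv, ← Complex.ofReal_mul, Real.mul_self_sqrt zero_le_two]; norm_num
  simp only [dotProduct, mulVec, psiPlus, Pi.star_apply, Fintype.sum_prod_type, Fin.sum_univ_succ,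
    Fin.sum_univ_zero, Prod.mk.injEq, Fin.isValue, Fin.reduceEq, Fin.succ_zero_eq_one,
    Fin.succ_one_eq_two, and_false, and_true, ite_true, ite_false, one_div,
    Complex.ofReal_inv, RCLike.star_def, map_inv₀, Complex.conj_ofReal, map_zero, mul_ite,
    mul_zero, zero_mul, add_zero, zero_add]
  linear_combination (M (0,0) (0,0) + M (0,0) (1,1) + M (1,1) (0,0) + M (1,1) (1,1)) * h

lemma trace_rhoIso_mul (p : ℝ) (M : M6) :
    (rhoIso p * M).trace =
      p * ((M (0,0) (0,0) + M (0,0) (1,1) + M (1,1) (0,0) + M (1,1) (1,1)) / 2)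
        + ((1 - p) / 6 : ℝ) * M.trace := by
  rw [rhoIso, add_mul, smul_mul, smul_mul, one_mul, trace_add, trace_smul, trace_smul,
    trace_proj_mul, star_psiPlus_dotProduct_mulVec, smul_eq_mul, smul_eq_mul]

lemma expval_rhoIso_Obs1 (p : ℝ) : expval (rhoIso p) (Obs1 1 Vswap) = 0 := by
  rw [expval, trace_rhoIso_mul]
  simp [Obs1, OA_one, OB_Vswap, sig3, lam1, lam2, trace, Fintype.sum_prod_type, Fin.sum_univ_succ,
    Equiv.swap_apply_of_ne_of_ne]
  ring

lemma expval_rhoIso_Obs2 (p : ℝ) : expval (rhoIso p) (Obs2 1 Vswap) = 2 * p := by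
  rw [expval, trace_rhoIso_mul]
  simp [Obs2, OA_one, OB_Vswap, sig1, sig2, lam3, lam4, trace, Fintype.sum_prod_type, Fin.sum_univ_succ,
    Equiv.swap_apply_of_ne_of_ne]
  ring

lemma expval_rhoIso_Obs0 (p : ℝ) : expval (rhoIso p) (Obs0 1 Vswap) = 2 - 2 * p := by
  rw [expval, trace_rhoIso_mul]
  simp [Obs0, OA_one, OB_Vswap, sig3, lam1, lam2, trace, Fintype.sum_prod_type, Fin.sum_univ_succ,
    Equiv.swap_apply_of_ne_of_ne]
  ring

theorem stmt_13_general (p : ℝ) (hp0 : 0 ≤ p) (F : ℝ)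
    (hF : F = Real.sqrt ((expval (rhoIso p) (Obs1 1 Vswap))^2
        + 9 * (expval (rhoIso p) (Obs2 1 Vswap))^2)
      - expval (rhoIso p) (Obs0 1 Vswap)) :
    F = 8 * p - 2 ∧ (0 < F ↔ 1/4 < p) := by
  have hF' : F = 8 * p - 2 := by
    rw [hF, expval_rhoIso_Obs1, expval_rhoIso_Obs2, expval_rhoIso_Obs0,
      show (0 : ℝ) ^ 2 + 9 * (2 * p) ^ 2 = (6 * p) ^ 2 by ring, Real.sqrt_sq (by positivity)]
    ring
  exact ⟨hF', by rw [hF']; constructor <;> intro <;> linarith⟩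

theorem stmt_13 (p : ℝ) (hp0 : 0 ≤ p) (hp1 : p ≤ 1) (F : ℝ)
    (hF : F = Real.sqrt ((expval (rhoIso p) (Obs1 1 Vswap))^2
        + 9 * (expval (rhoIso p) (Obs2 1 Vswap))^2)
      - expval (rhoIso p) (Obs0 1 Vswap)) :
    F = 8 * p - 2 ∧ (0 < F ↔ 1/4 < p) :=
  stmt_13_general p hp0 F hF
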